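/- Let σ satisfy the braid relations on tensor powers of V and define the braided factorial [n,σ]! = [n,σ]∘([n-1,σ]!⊗id) where [n,σ] = [n choose 1,σ] = id + σ_{n-1} + σ_{n-2}σ_{n-1} + ⋯ + σ₁⋯σ_{n-1}. Then the braided binomial theorem holds: [n,σ]! = [n choose k,σ]∘([n-k,σ]!⊗[k,σ]!) for all 0 ≤ k ≤ n. -/
import Mathlib


/-- Abstract model of the tower of tensor powers `V^⊗n` of an `A`-bimodule `V`
(tensor products over `A`), equipped with maps `sig n i` modelling the braiding
`σ` acting in tensor positions `i+1, i+2` (1-indexed), and operators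
`padL`/`padR` modelling `id ⊗ f` and `f ⊗ id`.  The structure fields record the
evident compatibilities that hold in the genuine tensor-power model. -/
structure BraidTower where
  T : ℕ → Type*
  acg : ∀ n, AddCommGroup (T n)
  sig : (n : ℕ) → ℕ → (T n →+ T n)
  padL : ∀ {m m' : ℕ}, (T m →+ T m') → (T (m + 1) →+ T (m' + 1))
  padR : ∀ {m m' : ℕ}, (T m →+ T m') → (T (m + 1) →+ T (m' + 1))
  padL_id : ∀ n, padL (AddMonoidHom.id (T n)) = AddMonoidHom.id (T (n + 1))
  padR_id : ∀ n, padR (AddMonoidHom.id (T n)) = AddMonoidHom.id (T (n + 1))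
  padL_comp : ∀ {a b c : ℕ} (f : T a →+ T b) (g : T b →+ T c),
    padL (g.comp f) = (padL g).comp (padL f)
  padR_comp : ∀ {a b c : ℕ} (f : T a →+ T b) (g : T b →+ T c),
    padR (g.comp f) = (padR g).comp (padR f)
  padL_add : ∀ {a b : ℕ} (f g : T a →+ T b), padL (f + g) = padL f + padL g
  padR_add : ∀ {a b : ℕ} (f g : T a →+ T b), padR (f + g) = padR f + padR g
  padLR : ∀ {a b : ℕ} (f : T a →+ T b), padL (padR f) = padR (padL f)
  padL_sig : ∀ n i, padL (sig n i) = sig (n + 1) (i + 1)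
  padR_sig : ∀ n i, padR (sig n i) = sig (n + 1) i
  sig_comm : ∀ n i j, i + 1 < j →
    (sig n i).comp (sig n j) = (sig n j).comp (sig n i)

attribute [instance] BraidTower.acg

namespace BraidTower

variable (D : BraidTower)

/-- The braid (Yang–Baxter) relations for `σ`. -/
def Braided : Prop :=
  ∀ n i, (D.sig n i).comp ((D.sig n (i + 1)).comp (D.sig n i))
    = (D.sig n (i + 1)).comp ((D.sig n i).comp (D.sig n (i + 1)))

/-- Transport an element along an equality of degrees. -/
def castT {n n' : ℕ} (h : n = n') (x : D.T n) : D.T n' := h ▸ x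

/-- Transport a morphism along equalities of degrees. -/
def castHom {a b a' b' : ℕ} (h1 : a = a') (h2 : b = b')
    (f : D.T a →+ D.T b) : D.T a' →+ D.T b' := by
  subst h1; subst h2; exact f

/-- Transport an endomorphism along an equality of degrees. -/
def castEndo {n n' : ℕ} (h : n = n') (f : D.T n →+ D.T n) :
    D.T n' →+ D.T n' := by subst h; exact f

/-- `σ₁ σ₂ ⋯ σ_m` (composition, with `σ_m` applied first). -/
def chain (n : ℕ) : ℕ → (D.T n →+ D.T n)
  | 0 => AddMonoidHom.id _
  | m + 1 => (chain n m).comp (D.sig n m)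

/-- The braided binomial `[n choose k, σ]`, defined by the recursion
`[n choose k, σ] = (id ⊗ [n-1 choose k-1, σ]) σ₁⋯σ_{n-k} + (id ⊗ [n-1 choose k, σ])`
with `[n choose 0, σ] = [n choose n, σ] = id`. -/
def binom : (n : ℕ) → ℕ → (D.T n →+ D.T n)
  | _, 0 => AddMonoidHom.id _
  | 0, _ + 1 => AddMonoidHom.id _
  | n + 1, k + 1 =>
    if k = n then AddMonoidHom.id _
    else ((D.padL (binom n k)).comp (chain D (n + 1) (n - k))) + D.padL (binom n (k + 1))

/-- `id^{⊗j} ⊗ f` (pad on the left `j` times). -/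
def padLs {a b : ℕ} (f : D.T a →+ D.T b) : (j : ℕ) → (D.T (a + j) →+ D.T (b + j))
  | 0 => f
  | j + 1 => D.padL (padLs f j)

/-- `f ⊗ id^{⊗j}` (pad on the right `j` times). -/
def padRs {a b : ℕ} (f : D.T a →+ D.T b) : (j : ℕ) → (D.T (a + j) →+ D.T (b + j))
  | 0 => f
  | j + 1 => D.padR (padRs f j)

/-- The braided factorial `[n,σ]! = [n,σ] ∘ ([n-1,σ]! ⊗ id)`, where
`[n,σ] = [n choose 1, σ]` is the braided integer. -/
def bfact : (n : ℕ) → (D.T n →+ D.T n)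
  | 0 => AddMonoidHom.id _
  | n + 1 => (binom D (n + 1) 1).comp (D.padR (bfact n))

end BraidTower

namespace BraidTower

variable (D : BraidTower)

/-! ### Cast lemmas -/

section CastLemmas
variable {n n' n'' a b : ℕ}

lemma castEndo_comp (h : n = n') (f g : D.T n →+ D.T n) :
    D.castEndo h (f.comp g) = (D.castEndo h f).comp (D.castEndo h g) := by
  subst h; rfl

lemma castEndo_add (h : n = n') (f g : D.T n →+ D.T n) :
    D.castEndo h (f + g) = D.castEndo h f + D.castEndo h g := by subst h; rfl

lemma castEndo_castEndo (h : n = n') (h' : n' = n'') (f : D.T n →+ D.T n) :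
    D.castEndo h' (D.castEndo h f) = D.castEndo (h.trans h') f := by subst h; subst h'; rfl

lemma castEndo_id (h : n = n') :
    D.castEndo h (AddMonoidHom.id (D.T n)) = AddMonoidHom.id (D.T n') := by subst h; rfl

lemma castEndo_sig (h : n = n') (i : ℕ) : D.castEndo h (D.sig n i) = D.sig n' i := by
  subst h; rfl

lemma castEndo_padL (h : a = b) (h2 : a + 1 = b + 1) (f : D.T a →+ D.T a) :
    D.castEndo h2 (D.padL f) = D.padL (D.castEndo h f) := by subst h; rfl

lemma castEndo_padR (h : a = b) (h2 : a + 1 = b + 1) (f : D.T a →+ D.T a) :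
    D.castEndo h2 (D.padR f) = D.padR (D.castEndo h f) := by subst h; rfl

end CastLemmas

/-! ### Iterated padding -/

section PadLemmas
variable {a : ℕ}

lemma padLs_id (a j : ℕ) :
    padLs D (AddMonoidHom.id (D.T a)) j = AddMonoidHom.id (D.T (a + j)) := by
  induction j with
  | zero => rfl
  | succ j ih => show D.padL _ = _; rw [ih]; exact D.padL_id (a + j)

lemma padRs_id (a j : ℕ) :
    padRs D (AddMonoidHom.id (D.T a)) j = AddMonoidHom.id (D.T (a + j)) := by
  induction j with
  | zero => rfl
  | succ j ih => show D.padR _ = _; rw [ih]; exact D.padR_id (a + j)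

lemma padLs_comp (f g : D.T a →+ D.T a) (j : ℕ) :
    padLs D (f.comp g) j = (padLs D f j).comp (padLs D g j) := by
  induction j with
  | zero => rfl
  | succ j ih => show D.padL _ = _; rw [ih, D.padL_comp]; rfl

lemma padRs_comp (f g : D.T a →+ D.T a) (j : ℕ) :
    padRs D (f.comp g) j = (padRs D f j).comp (padRs D g j) := by
  induction j with
  | zero => rfl
  | succ j ih => show D.padR _ = _; rw [ih, D.padR_comp]; rfl

lemma padLs_add (f g : D.T a →+ D.T a) (j : ℕ) :
    padLs D (f + g) j = padLs D f j + padLs D g j := by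
  induction j with
  | zero => rfl
  | succ j ih => show D.padL _ = _; rw [ih, D.padL_add]; rfl

lemma padLs_padR (f : D.T a →+ D.T a) (j : ℕ) (h : (a + j) + 1 = (a + 1) + j) :
    padLs D (D.padR f) j = D.castEndo h (D.padR (padLs D f j)) := by
  induction j with
  | zero => rfl
  | succ j ih =>
    show D.padL (padLs D (D.padR f) j) = _
    rw [ih (by omega)]
    rw [← castEndo_padL D (show (a + j) + 1 = (a + 1) + j by omega)
      (show ((a + j) + 1) + 1 = ((a + 1) + j) + 1 by omega)]
    rw [D.padLR]
    rfl

lemma padLs_padL (f : D.T a →+ D.T a) (j : ℕ) (h : (a + j) + 1 = (a + 1) + j) :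
    padLs D (D.padL f) j = D.castEndo h (D.padL (padLs D f j)) := by
  induction j with
  | zero => rfl
  | succ j ih =>
    show D.padL (padLs D (D.padL f) j) = _
    rw [ih (by omega)]
    rw [← castEndo_padL D (show (a + j) + 1 = (a + 1) + j by omega)
      (show ((a + j) + 1) + 1 = ((a + 1) + j) + 1 by omega)]
    rfl

end PadLemmas

/-! ### Shifted chains -/

/-- `σ_j σ_{j+1} ⋯ σ_{j+s-1}` (with `σ_{j+s-1}` applied first). -/
def schain (n j : ℕ) : ℕ → (D.T n →+ D.T n)
  | 0 => AddMonoidHom.id _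
  | s + 1 => (schain n j s).comp (D.sig n (j + s))

lemma chain_eq_schain (n m : ℕ) : chain D n m = schain D n 0 m := by
  induction m with
  | zero => rfl
  | succ m ih =>
    show (chain D n m).comp (D.sig n m) = (schain D n 0 m).comp (D.sig n (0 + m))
    rw [ih, Nat.zero_add]

lemma castEndo_schain {n n' : ℕ} (h : n = n') (j s : ℕ) :
    D.castEndo h (schain D n j s) = schain D n' j s := by subst h; rfl

lemma castEndo_chain {n n' : ℕ} (h : n = n') (m : ℕ) :
    D.castEndo h (chain D n m) = chain D n' m := by subst h; rfl

lemma castEndo_binom {n n' : ℕ} (h : n = n') (k : ℕ) :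
    D.castEndo h (binom D n k) = binom D n' k := by subst h; rfl

lemma castEndo_bfact {n n' : ℕ} (h : n = n') :
    D.castEndo h (bfact D n) = bfact D n' := by subst h; rfl

lemma padL_schain (n j s : ℕ) : D.padL (schain D n j s) = schain D (n + 1) (j + 1) s := by
  induction s with
  | zero => exact D.padL_id n
  | succ s ih =>
    show D.padL ((schain D n j s).comp (D.sig n (j + s))) = _
    rw [D.padL_comp, ih, D.padL_sig, show j + s + 1 = (j + 1) + s by omega]
    rfl

lemma padR_schain (n j s : ℕ) : D.padR (schain D n j s) = schain D (n + 1) j s := by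
  induction s with
  | zero => exact D.padR_id n
  | succ s ih =>
    show D.padR ((schain D n j s).comp (D.sig n (j + s))) = _
    rw [D.padR_comp, ih, D.padR_sig]
    rfl

lemma padR_chain (n m : ℕ) : D.padR (chain D n m) = chain D (n + 1) m := by
  rw [chain_eq_schain, padR_schain, chain_eq_schain]

lemma padLs_chain (m s j : ℕ) : padLs D (chain D m s) j = schain D (m + j) j s := by
  induction j with
  | zero => exact chain_eq_schain D m s
  | succ j ih =>
    show D.padL (padLs D (chain D m s) j) = _
    rw [ih, padL_schain]; rfl

lemma chain_append (n j s : ℕ) :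
    chain D n (j + s) = (chain D n j).comp (schain D n j s) := by
  induction s with
  | zero => exact (AddMonoidHom.comp_id _).symm
  | succ s ih =>
    show (chain D n (j + s)).comp (D.sig n (j + s)) = _
    rw [ih]
    exact AddMonoidHom.comp_assoc _ _ _

/-! ### Commutation of chains with distant generators, and the braid conjugation -/

lemma chain_sig_comm {n m t : ℕ} (h : m + 1 ≤ t) :
    (chain D n m).comp (D.sig n t) = (D.sig n t).comp (chain D n m) := by
  induction m with
  | zero => simp [chain]
  | succ m ih =>
    show ((chain D n m).comp (D.sig n m)).comp (D.sig n t) = _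
    rw [AddMonoidHom.comp_assoc, D.sig_comm n m t (by omega), ← AddMonoidHom.comp_assoc,
      ih (by omega), AddMonoidHom.comp_assoc]
    rfl

lemma chain_conj (hb : D.Braided) {n m i : ℕ} (h : i + 2 ≤ m) :
    (chain D n m).comp (D.sig n i) = (D.sig n (i + 1)).comp (chain D n m) := by
  induction m, h using Nat.le_induction with
  | base =>
    show (((chain D n i).comp (D.sig n i)).comp (D.sig n (i + 1))).comp (D.sig n i) = _
    rw [AddMonoidHom.comp_assoc, AddMonoidHom.comp_assoc, hb n i,
      ← AddMonoidHom.comp_assoc, ← AddMonoidHom.comp_assoc,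
      chain_sig_comm D (show i + 1 ≤ i + 1 from le_refl _),
      AddMonoidHom.comp_assoc, AddMonoidHom.comp_assoc]
    rfl
  | succ m hm ih =>
    show ((chain D n m).comp (D.sig n m)).comp (D.sig n i) = _
    rw [AddMonoidHom.comp_assoc, ← D.sig_comm n i m (by omega), ← AddMonoidHom.comp_assoc,
      ih, AddMonoidHom.comp_assoc]
    rfl

/-! ### The `Band` predicate: maps generated by generators in a band of positions -/

inductive Band (D : BraidTower) : (n lo hi : ℕ) → (D.T n →+ D.T n) → Prop where
  | id (n lo hi : ℕ) : Band D n lo hi (AddMonoidHom.id _)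
  | sig {n lo hi : ℕ} (i : ℕ) (h1 : lo ≤ i) (h2 : i + 2 ≤ hi) : Band D n lo hi (D.sig n i)
  | add {n lo hi : ℕ} {f g : D.T n →+ D.T n} (hf : Band D n lo hi f)
      (hg : Band D n lo hi g) : Band D n lo hi (f + g)
  | comp {n lo hi : ℕ} {f g : D.T n →+ D.T n} (hf : Band D n lo hi f)
      (hg : Band D n lo hi g) : Band D n lo hi (f.comp g)

lemma band_mono {n lo hi lo' hi' : ℕ} {f : D.T n →+ D.T n} (hf : Band D n lo hi f)
    (h1 : lo' ≤ lo) (h2 : hi ≤ hi') : Band D n lo' hi' f := by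
  induction hf with
  | id => exact Band.id _ _ _
  | sig i hl hh => exact Band.sig i (by omega) (by omega)
  | add _ _ ih1 ih2 => exact Band.add ih1 ih2
  | comp _ _ ih1 ih2 => exact Band.comp ih1 ih2

lemma band_comm {n l1 h1 l2 h2 : ℕ} {f g : D.T n →+ D.T n}
    (hf : Band D n l1 h1 f) (hg : Band D n l2 h2 g) (hle : h1 ≤ l2) :
    f.comp g = g.comp f := by
  induction hf with
  | id => rw [AddMonoidHom.id_comp, AddMonoidHom.comp_id]
  | sig i hl hh =>
    induction hg with
    | id => rw [AddMonoidHom.id_comp, AddMonoidHom.comp_id]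
    | sig i' hl' hh' => exact D.sig_comm n i i' (by omega)
    | add _ _ ih1 ih2 => rw [AddMonoidHom.comp_add, AddMonoidHom.add_comp, ih1, ih2]
    | comp _ _ ih1 ih2 =>
      rw [← AddMonoidHom.comp_assoc, ih1, AddMonoidHom.comp_assoc, ih2,
        ← AddMonoidHom.comp_assoc]
  | add _ _ ih1 ih2 => rw [AddMonoidHom.add_comp, AddMonoidHom.comp_add, ih1, ih2]
  | comp _ _ ih1 ih2 =>
    rw [AddMonoidHom.comp_assoc, ih2, ← AddMonoidHom.comp_assoc, ih1,
      AddMonoidHom.comp_assoc]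

lemma band_castEndo {n n' lo hi : ℕ} {f : D.T n →+ D.T n} (h : n = n')
    (hf : Band D n lo hi f) : Band D n' lo hi (D.castEndo h f) := by
  subst h; exact hf

lemma band_padL {n lo hi : ℕ} {f : D.T n →+ D.T n} (hf : Band D n lo hi f) :
    Band D (n + 1) (lo + 1) (hi + 1) (D.padL f) := by
  induction hf with
  | id => rw [D.padL_id]; exact Band.id _ _ _
  | sig i hl hh => rw [D.padL_sig]; exact Band.sig (i + 1) (by omega) (by omega)
  | add _ _ ih1 ih2 => rw [D.padL_add]; exact Band.add ih1 ih2
  | comp _ _ ih1 ih2 => rw [D.padL_comp]; exact Band.comp ih1 ih2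

lemma band_padR {n lo hi : ℕ} {f : D.T n →+ D.T n} (hf : Band D n lo hi f) :
    Band D (n + 1) lo hi (D.padR f) := by
  induction hf with
  | id => rw [D.padR_id]; exact Band.id _ _ _
  | sig i hl hh => rw [D.padR_sig]; exact Band.sig i (by omega) (by omega)
  | add _ _ ih1 ih2 => rw [D.padR_add]; exact Band.add ih1 ih2
  | comp _ _ ih1 ih2 => rw [D.padR_comp]; exact Band.comp ih1 ih2

lemma band_padLs {a lo hi : ℕ} {f : D.T a →+ D.T a} (hf : Band D a lo hi f) (j : ℕ) :
    Band D (a + j) (lo + j) (hi + j) (padLs D f j) := by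
  induction j with
  | zero => exact hf
  | succ j ih => exact band_padL D ih

lemma band_padRs {a lo hi : ℕ} {f : D.T a →+ D.T a} (hf : Band D a lo hi f) (j : ℕ) :
    Band D (a + j) lo hi (padRs D f j) := by
  induction j with
  | zero => exact hf
  | succ j ih => exact band_padR D ih

lemma band_chain (n m : ℕ) : Band D n 0 (m + 1) (chain D n m) := by
  induction m with
  | zero => exact Band.id _ _ _
  | succ m ih =>
    exact Band.comp (band_mono D ih (le_refl _) (by omega)) (Band.sig m (by omega) (by omega))

lemma band_schain (n j s : ℕ) : Band D n j (j + s + 1) (schain D n j s) := by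
  induction s with
  | zero => exact Band.id _ _ _
  | succ s ih =>
    exact Band.comp (band_mono D ih (le_refl _) (by omega)) (Band.sig (j + s) (by omega) (by omega))

/-! ### Unfolding lemmas for `binom` -/

lemma binom_zero (n : ℕ) : binom D n 0 = AddMonoidHom.id _ := by
  cases n <;> rfl

lemma binom_self (n : ℕ) : binom D n n = AddMonoidHom.id _ := by
  cases n with
  | zero => rfl
  | succ n => show binom D (n + 1) (n + 1) = _; rw [binom]; simp

lemma binom_succ (n k : ℕ) (h : k ≠ n) :
    binom D (n + 1) (k + 1)
      = ((D.padL (binom D n k)).comp (chain D (n + 1) (n - k))) + D.padL (binom D n (k + 1)) := by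
  rw [binom]; simp [h]

lemma binom_one (n : ℕ) :
    binom D (n + 1 + 1) 1 = chain D (n + 1 + 1) (n + 1) + D.padL (binom D (n + 1) 1) := by
  rw [binom_succ D (n + 1) 0 (by omega), binom_zero, D.padL_id, AddMonoidHom.id_comp,
    Nat.sub_zero]

lemma band_binom : ∀ n k, k ≤ n → Band D n 0 n (binom D n k) := by
  intro n
  induction n with
  | zero =>
    intro k hk
    obtain rfl : k = 0 := by omega
    exact Band.id _ _ _
  | succ n ih =>
    intro k hk
    match k with
    | 0 => rw [binom_zero]; exact Band.id _ _ _
    | k + 1 =>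
      by_cases hkn : k = n
      · subst hkn; rw [binom_self]; exact Band.id _ _ _
      · rw [binom_succ D n k hkn]
        refine Band.add (Band.comp ?_ ?_) ?_
        · exact band_mono D (band_padL D (ih k (by omega))) (by omega) (le_refl _)
        · exact band_mono D (band_chain D (n + 1) (n - k)) (le_refl _) (by omega)
        · exact band_mono D (band_padL D (ih (k + 1) (by omega))) (by omega) (le_refl _)

lemma band_bfact (n : ℕ) : Band D n 0 n (bfact D n) := by
  induction n with
  | zero => exact Band.id _ _ _
  | succ n ih =>
    show Band D (n + 1) 0 (n + 1) ((binom D (n + 1) 1).comp (D.padR (bfact D n)))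
    exact Band.comp (band_binom D (n + 1) 1 (by omega))
      (band_mono D (band_padR D ih) (le_refl _) (by omega))

/-! ### Naturality of the long chain -/

lemma pad_conj (hb : D.Braided) {n : ℕ} {Z : D.T n →+ D.T n} (hZ : Band D n 0 n Z) :
    (D.padL Z).comp (chain D (n + 1) n) = (chain D (n + 1) n).comp (D.padR Z) := by
  induction hZ with
  | id =>
    rw [D.padL_id, D.padR_id, AddMonoidHom.id_comp, AddMonoidHom.comp_id]
  | sig i hl hh =>
    rw [D.padL_sig, D.padR_sig]
    exact (chain_conj D hb (by omega)).symm
  | add _ _ ih1 ih2 =>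
    rw [D.padL_add, D.padR_add, AddMonoidHom.add_comp, AddMonoidHom.comp_add, ih1, ih2]
  | comp _ _ ih1 ih2 =>
    rw [D.padL_comp, D.padR_comp, AddMonoidHom.comp_assoc, ih2, ← AddMonoidHom.comp_assoc,
      ih1, AddMonoidHom.comp_assoc]


/-! ### The key lemma:
`[n choose k+1] ∘ (id^{⊗ j} ⊗ [k+1]) = [n] ∘ ([n-1 choose k] ⊗ id)` for `n = j + k + 1`. -/

lemma lkey (hb : D.Braided) :
    ∀ (j k n : ℕ), n = j + (k + 1) → ∀ (h1 : (k + 1) + j = n) (h2 : (j + k) + 1 = n),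
    (binom D n (k + 1)).comp (D.castEndo h1 (padLs D (binom D (k + 1) 1) j))
      = (binom D n 1).comp (D.castEndo h2 (D.padR (binom D (j + k) k))) := by
  intro j
  induction j with
  | zero =>
    intro k n hn h1 h2
    obtain rfl : n = k + 1 := by omega
    rw [binom_self, AddMonoidHom.id_comp]
    have e1 : D.castEndo h1 (padLs D (binom D (k + 1) 1) 0) = binom D (k + 1) 1 := rfl
    rw [e1]
    have e2 : binom D (0 + k) k = D.castEndo (show k = 0 + k by omega) (binom D k k) :=
      (castEndo_binom D _ _).symm
    rw [e2, binom_self, castEndo_id]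
    have e3 : D.padR (AddMonoidHom.id (D.T (0 + k))) = AddMonoidHom.id _ := D.padR_id (0 + k)
    rw [e3, castEndo_id, AddMonoidHom.comp_id]
  | succ j ihj =>
    intro k
    induction k with
    | zero =>
      intro n hn h1 h2
      have e1 : binom D 1 1 = AddMonoidHom.id _ := binom_self D 1
      rw [e1, padLs_id, castEndo_id, AddMonoidHom.comp_id]
      have e2 : binom D (j + 1 + 0) 0 = AddMonoidHom.id _ := binom_zero D _
      rw [e2]
      have e3 : D.padR (AddMonoidHom.id (D.T (j + 1 + 0))) = AddMonoidHom.id _ :=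
        D.padR_id (j + 1 + 0)
      rw [e3, castEndo_id, AddMonoidHom.comp_id]
    | succ k ihk =>
      intro n hn h1 h2
      obtain rfl : n = (j + 1) + (k + 1) + 1 := by omega
      -- second summand of the binomial recursion, handled by the outer IH
      have hX2 : (D.padL (binom D ((j + 1) + (k + 1)) (k + 1 + 1))).comp
            (D.castEndo h1 (padLs D (binom D (k + 1 + 1) 1) (j + 1)))
          = D.padL ((binom D ((j + 1) + (k + 1)) 1).comp
              (D.padR (binom D ((j + 1) + k) (k + 1)))) := by
        have c1 : D.castEndo h1 (padLs D (binom D (k + 1 + 1) 1) (j + 1))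
            = D.padL (D.castEndo (show (k + 1 + 1) + j = (j + 1) + (k + 1) by omega)
                (padLs D (binom D (k + 1 + 1) 1) j)) := by
          show D.castEndo h1 (D.padL (padLs D (binom D (k + 1 + 1) 1) j)) = _
          exact castEndo_padL D _ _ _
        rw [c1, ← D.padL_comp]
        rw [ihj (k + 1) ((j + 1) + (k + 1)) (by omega) _
          (show (j + (k + 1)) + 1 = (j + 1) + (k + 1) by omega)]
        rw [castEndo_padR D (show j + (k + 1) = (j + 1) + k by omega)
          (show (j + (k + 1)) + 1 = (j + 1) + (k + 1) by omega)]
        rw [castEndo_binom]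
      -- decomposition of the cast padded integer
      have e2 : D.castEndo h1 (padLs D (binom D (k + 1 + 1) 1) (j + 1))
          = schain D ((j + 1) + (k + 1) + 1) (j + 1) (k + 1)
            + D.padL (D.castEndo (show (k + 1) + (j + 1) = (j + 1) + (k + 1) by omega)
                (padLs D (binom D (k + 1) 1) (j + 1))) := by
        rw [binom_one D k, padLs_add, padLs_chain D (k + 1 + 1) (k + 1) (j + 1),
          padLs_padL D (binom D (k + 1) 1) (j + 1)
            (show ((k + 1) + (j + 1)) + 1 = ((k + 1) + 1) + (j + 1) by omega),
          castEndo_add, castEndo_schain, castEndo_castEndo,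
          castEndo_padL D (show (k + 1) + (j + 1) = (j + 1) + (k + 1) by omega)]
      rw [binom_succ D ((j + 1) + (k + 1)) (k + 1) (by omega),
        show (j + 1) + (k + 1) - (k + 1) = j + 1 from by omega,
        AddMonoidHom.add_comp, hX2, AddMonoidHom.comp_assoc, e2, AddMonoidHom.comp_add,
        ← chain_append D ((j + 1) + (k + 1) + 1) (j + 1) (k + 1), AddMonoidHom.comp_add]
      rw [pad_conj D hb (band_binom D ((j + 1) + (k + 1)) (k + 1) (by omega))]
      -- commute the chain with the high band factor
      have sw : (chain D ((j + 1) + (k + 1) + 1) (j + 1)).comp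
            (D.padL (D.castEndo (show (k + 1) + (j + 1) = (j + 1) + (k + 1) by omega)
              (padLs D (binom D (k + 1) 1) (j + 1))))
          = (D.padL (D.castEndo (show (k + 1) + (j + 1) = (j + 1) + (k + 1) by omega)
              (padLs D (binom D (k + 1) 1) (j + 1)))).comp
            (chain D ((j + 1) + (k + 1) + 1) (j + 1)) := by
        refine band_comm D (band_chain D _ (j + 1))
          (band_padL D (band_castEndo D _ (band_padLs D (band_binom D (k + 1) 1 (by omega))
            (j + 1)))) (by omega)
      rw [sw, ← AddMonoidHom.comp_assoc, ← D.padL_comp]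
      rw [ihk ((j + 1) + (k + 1)) rfl _ (show ((j + 1) + k) + 1 = (j + 1) + (k + 1) by omega)]
      have cd : D.castEndo (show ((j + 1) + k) + 1 = (j + 1) + (k + 1) by omega)
          (D.padR (binom D ((j + 1) + k) k)) = D.padR (binom D ((j + 1) + k) k) := rfl
      rw [cd]
      -- now rework the right-hand side
      have r0 : D.castEndo h2 (D.padR (binom D ((j + 1) + (k + 1)) (k + 1)))
          = D.padR (binom D ((j + 1) + (k + 1)) (k + 1)) := rfl
      have rO : binom D ((j + 1) + (k + 1) + 1) 1
          = chain D ((j + 1) + (k + 1) + 1) ((j + 1) + (k + 1))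
            + D.padL (binom D ((j + 1) + (k + 1)) 1) := binom_one D ((j + 1) + k)
      rw [r0, rO, AddMonoidHom.add_comp]
      have bS : binom D ((j + 1) + k + 1) (k + 1)
          = (D.padL (binom D ((j + 1) + k) k)).comp (chain D ((j + 1) + k + 1) (j + 1))
            + D.padL (binom D ((j + 1) + k) (k + 1)) := by
        have h := binom_succ D ((j + 1) + k) k (by omega)
        rw [show (j + 1) + k - k = j + 1 from by omega] at h
        exact h
      have rB : (D.padL (binom D ((j + 1) + k + 1) 1)).comp
            (D.padR (binom D ((j + 1) + k + 1) (k + 1)))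
          = (D.padL ((binom D ((j + 1) + k + 1) 1).comp
                (D.padR (binom D ((j + 1) + k) k)))).comp
              (chain D ((j + 1) + k + 1 + 1) (j + 1))
            + D.padL ((binom D ((j + 1) + k + 1) 1).comp
                (D.padR (binom D ((j + 1) + k) (k + 1)))) := by
        rw [bS, D.padR_add, D.padR_comp, ← D.padLR, AddMonoidHom.comp_add,
          ← AddMonoidHom.comp_assoc, ← D.padL_comp]
        have pc : D.padR (chain D ((j + 1) + k + 1) (j + 1))
            = chain D ((j + 1) + k + 1 + 1) (j + 1) := padR_chain D _ _
        rw [pc, ← D.padLR, ← D.padL_comp]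
      refine (add_assoc _ _ _).trans ?_
      congr 1
      exact rB.symm

end BraidTower


open BraidTower in
/-- **Braided binomial theorem.**
If `σ` satisfies the braid relations then the braided factorials obey
`[n,σ]! = [n choose k, σ] ∘ ([n-k,σ]! ⊗ [k,σ]!)` for all `0 ≤ k ≤ n`
(written here with `n = j + k`, so `n - k = j`).  Here
`f ⊗ g = (f ⊗ id^{⊗k}) ∘ (id^{⊗j} ⊗ g)`. -/
theorem braided_binomial_theorem (D : BraidTower) (hbraid : D.Braided)
    (j k : ℕ) :
    bfact D (j + k)
      = (binom D (j + k) k).comp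
          ((padRs D (bfact D j) k).comp
            (castEndo D (show k + j = j + k by omega) (padLs D (bfact D k) j))) := by
  induction k with
  | zero =>
    rw [binom_zero, AddMonoidHom.id_comp]
    have e0 : bfact D 0 = AddMonoidHom.id (D.T 0) := rfl
    rw [e0, padLs_id, castEndo_id, AddMonoidHom.comp_id]
    rfl
  | succ k ih =>
    -- decompose the cast left-padded factorial
    have d1 : padLs D (bfact D (k + 1)) j
        = (padLs D (binom D (k + 1) 1) j).comp
            (D.castEndo (show (k + j) + 1 = (k + 1) + j by omega)
              (D.padR (padLs D (bfact D k) j))) := by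
      have e : bfact D (k + 1) = (binom D (k + 1) 1).comp (D.padR (bfact D k)) := rfl
      rw [e, padLs_comp, padLs_padR D (bfact D k) j (show (k + j) + 1 = (k + 1) + j by omega)]
    have d2 : D.castEndo (show (k + 1) + j = j + (k + 1) by omega)
          (padLs D (bfact D (k + 1)) j)
        = (D.castEndo (show (k + 1) + j = j + (k + 1) by omega)
              (padLs D (binom D (k + 1) 1) j)).comp
            (D.padR (D.castEndo (show k + j = j + k by omega) (padLs D (bfact D k) j))) := by
      rw [d1, castEndo_comp, castEndo_castEndo,
        castEndo_padR D (show k + j = j + k by omega)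
          (show (k + j) + 1 = j + (k + 1) by omega)]
    -- commute the right-padded factorial past the cast left-padded integer
    have sw : (padRs D (bfact D j) (k + 1)).comp
          (D.castEndo (show (k + 1) + j = j + (k + 1) by omega)
            (padLs D (binom D (k + 1) 1) j))
        = (D.castEndo (show (k + 1) + j = j + (k + 1) by omega)
              (padLs D (binom D (k + 1) 1) j)).comp (padRs D (bfact D j) (k + 1)) :=
      band_comm D (band_padRs D (band_bfact D j) (k + 1))
        (band_castEndo D _ (band_padLs D (band_binom D (k + 1) 1 (by omega)) j)) (by omega)
    have key := lkey D hbraid j k (j + (k + 1)) rfl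
      (show (k + 1) + j = j + (k + 1) by omega) (show (j + k) + 1 = j + (k + 1) by omega)
    have cd : D.castEndo (show (j + k) + 1 = j + (k + 1) by omega)
        (D.padR (binom D (j + k) k)) = D.padR (binom D (j + k) k) := rfl
    rw [cd] at key
    have pp : padRs D (bfact D j) (k + 1) = D.padR (padRs D (bfact D j) k) := rfl
    refine Eq.symm ?_
    calc (binom D (j + (k + 1)) (k + 1)).comp ((padRs D (bfact D j) (k + 1)).comp
          (D.castEndo (show (k + 1) + j = j + (k + 1) by omega)
            (padLs D (bfact D (k + 1)) j)))
        = (binom D (j + (k + 1)) (k + 1)).comp ((padRs D (bfact D j) (k + 1)).comp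
            ((D.castEndo (show (k + 1) + j = j + (k + 1) by omega)
                (padLs D (binom D (k + 1) 1) j)).comp
              (D.padR (D.castEndo (show k + j = j + k by omega)
                (padLs D (bfact D k) j))))) := by rw [d2]
      _ = (binom D (j + (k + 1)) (k + 1)).comp (((padRs D (bfact D j) (k + 1)).comp
            (D.castEndo (show (k + 1) + j = j + (k + 1) by omega)
                (padLs D (binom D (k + 1) 1) j))).comp
              (D.padR (D.castEndo (show k + j = j + k by omega)
                (padLs D (bfact D k) j)))) :=
        congrArg _ (AddMonoidHom.comp_assoc _ _ _).symm
      _ = (binom D (j + (k + 1)) (k + 1)).comp (((D.castEndo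
              (show (k + 1) + j = j + (k + 1) by omega)
                (padLs D (binom D (k + 1) 1) j)).comp
              (padRs D (bfact D j) (k + 1))).comp
              (D.padR (D.castEndo (show k + j = j + k by omega)
                (padLs D (bfact D k) j)))) := by rw [sw]
      _ = (binom D (j + (k + 1)) (k + 1)).comp ((D.castEndo
              (show (k + 1) + j = j + (k + 1) by omega)
                (padLs D (binom D (k + 1) 1) j)).comp
              ((padRs D (bfact D j) (k + 1)).comp
              (D.padR (D.castEndo (show k + j = j + k by omega)
                (padLs D (bfact D k) j))))) :=
        congrArg _ (AddMonoidHom.comp_assoc _ _ _)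
      _ = ((binom D (j + (k + 1)) (k + 1)).comp (D.castEndo
              (show (k + 1) + j = j + (k + 1) by omega)
                (padLs D (binom D (k + 1) 1) j))).comp
              ((padRs D (bfact D j) (k + 1)).comp
              (D.padR (D.castEndo (show k + j = j + k by omega)
                (padLs D (bfact D k) j)))) :=
        (AddMonoidHom.comp_assoc _ _ _).symm
      _ = ((binom D (j + (k + 1)) 1).comp (D.padR (binom D (j + k) k))).comp
              ((D.padR (padRs D (bfact D j) k)).comp
              (D.padR (D.castEndo (show k + j = j + k by omega)
                (padLs D (bfact D k) j)))) := by rw [key, pp]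
      _ = ((binom D (j + (k + 1)) 1).comp (D.padR (binom D (j + k) k))).comp
              (D.padR ((padRs D (bfact D j) k).comp
              (D.castEndo (show k + j = j + k by omega)
                (padLs D (bfact D k) j)))) := by rw [D.padR_comp]
      _ = (binom D (j + (k + 1)) 1).comp ((D.padR (binom D (j + k) k)).comp
              (D.padR ((padRs D (bfact D j) k).comp
              (D.castEndo (show k + j = j + k by omega)
                (padLs D (bfact D k) j))))) :=
        AddMonoidHom.comp_assoc _ _ _
      _ = (binom D (j + (k + 1)) 1).comp
              (D.padR ((binom D (j + k) k).comp ((padRs D (bfact D j) k).comp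
              (D.castEndo (show k + j = j + k by omega)
                (padLs D (bfact D k) j))))) := by rw [← D.padR_comp]
      _ = (binom D (j + (k + 1)) 1).comp (D.padR (bfact D (j + k))) := by rw [← ih]
      _ = bfact D (j + (k + 1)) := rfl
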